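/- arXiv:1501.01014 — 2 statements merged into one kernel-verified Lean document; each statement's English description precedes it below -/
import Mathlib

section
/- For every real y with |y| < h_b, the quantum dilogarithm tends to 1 along the left end of the strip: lim_{x → −∞, x ∈ ℝ} Φ_b(x + iy) = 1. -/
/-!
On the shifted contour `t + iε`, the factor `exp (-2i x (t + iε))` has modulus `exp (2xε)`
independently of `t`. Hence the integral in the exponent of `Φ_b(x + iy)` is bounded by
`exp (2xε)` times the `L¹` norm of the integrand at `iy`, and tends to `0` as `x → -∞`.
-/

open MeasureTheory Filter Real

/-- Faddeev's quantum dilogarithm, defined on the strip `|Im z| < (b + b⁻¹)/2`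
via the contour integral with regularization parameter `ε`,
`0 < ε < π * min b b⁻¹`. -/
noncomputable def Phib (b ε : ℝ) (z : ℂ) : ℂ :=
  Complex.exp (∫ t : ℝ,
    Complex.exp (-2 * Complex.I * z * ((t : ℂ) + Complex.I * (ε : ℂ))) /
      (4 * Complex.sinh ((b : ℂ) * ((t : ℂ) + Complex.I * (ε : ℂ))) *
        Complex.sinh ((b : ℂ)⁻¹ * ((t : ℂ) + Complex.I * (ε : ℂ))) *
        ((t : ℂ) + Complex.I * (ε : ℂ))))

/-- The function `Ψ_{a,c}(x) = e^{2πax} / Φ_b(x − i(a+c))`. -/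
noncomputable def Psi (b ε a c : ℝ) (x : ℝ) : ℂ :=
  Complex.exp (2 * (Real.pi : ℂ) * (a : ℂ) * (x : ℂ)) /
    Phib b ε ((x : ℂ) - Complex.I * ((a : ℂ) + (c : ℂ)))

/-- The normalized quantum dilogarithm `φ_b(z) = Φ_b(z) e^{−πiz²/2} e^{−πi(b²+b⁻²)/24}`. -/
noncomputable def phib (b ε : ℝ) (z : ℂ) : ℂ :=
  Phib b ε z * Complex.exp (-(Real.pi : ℂ) * Complex.I * z ^ 2 / 2) *
    Complex.exp (-(Real.pi : ℂ) * Complex.I * ((b : ℂ) ^ 2 + (b : ℂ)⁻¹ ^ 2) / 24)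

open Topology

/-- No integrability hypothesis is needed: `‖∫ f‖ ≤ ∫ ‖f‖` holds for every `f`. -/
theorem tendsto_integral_mul_of_norm_eq {α ι : Type*} [MeasurableSpace α] {μ : Measure α}
    {l : Filter ι} {φ : ι → α → ℂ} {r : ι → ℝ} (g : α → ℂ)
    (hφ : ∀ i t, ‖φ i t‖ = r i) (hr : Tendsto r l (𝓝 0)) :
    Tendsto (fun i => ∫ t, φ i t * g t ∂μ) l (𝓝 0) := by
  refine squeeze_zero_norm (fun i => ?_) (by simpa using hr.mul_const (∫ t, ‖g t‖ ∂μ))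
  calc ‖∫ t, φ i t * g t ∂μ‖ ≤ ∫ t, ‖φ i t * g t‖ ∂μ := norm_integral_le_integral_norm _
    _ = r i * ∫ t, ‖g t‖ ∂μ := by simp only [norm_mul, hφ, integral_const_mul]

noncomputable def phibIntegrand (b ε : ℝ) (z : ℂ) (t : ℝ) : ℂ :=
  Complex.exp (-2 * Complex.I * z * ((t : ℂ) + Complex.I * (ε : ℂ))) /
    (4 * Complex.sinh ((b : ℂ) * ((t : ℂ) + Complex.I * (ε : ℂ))) *
      Complex.sinh ((b : ℂ)⁻¹ * ((t : ℂ) + Complex.I * (ε : ℂ))) *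
      ((t : ℂ) + Complex.I * (ε : ℂ)))

theorem Phib_eq_exp_integral (b ε : ℝ) (z : ℂ) :
    Phib b ε z = Complex.exp (∫ t, phibIntegrand b ε z t) := rfl

theorem phibIntegrand_ofReal_add (b ε x : ℝ) (z : ℂ) (t : ℝ) :
    phibIntegrand b ε (x + z) t =
      Complex.exp (-2 * Complex.I * x * (t + Complex.I * ε)) * phibIntegrand b ε z t := by
  rw [phibIntegrand, phibIntegrand, mul_div_assoc', ← Complex.exp_add]
  ring_nf

theorem norm_exp_neg_two_I_mul (x t ε : ℝ) :
    ‖Complex.exp (-2 * Complex.I * x * (t + Complex.I * ε))‖ = Real.exp (2 * x * ε) := by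
  rw [Complex.norm_exp]
  simp [Complex.mul_re, Complex.mul_im]

theorem tendsto_integral_phibIntegrand_atBot (b : ℝ) {ε : ℝ} (hε : 0 < ε) (z : ℂ) :
    Tendsto (fun x : ℝ => ∫ t, phibIntegrand b ε (x + z) t) atBot (𝓝 0) := by
  simp only [phibIntegrand_ofReal_add]
  refine tendsto_integral_mul_of_norm_eq _ (fun x t => norm_exp_neg_two_I_mul x t ε) ?_
  exact Real.tendsto_exp_atBot.comp
    ((tendsto_id.const_mul_atBot two_pos).atBot_mul_const hε)

theorem Phib_tendsto_one_atBot_general (b ε : ℝ)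
    (hε0 : 0 < ε)
    (y : ℝ) :
    Tendsto (fun x : ℝ => Phib b ε ((x : ℂ) + Complex.I * (y : ℂ))) atBot (nhds 1) := by
  simp only [Phib_eq_exp_integral]
  rw [← Complex.exp_zero]
  exact (Complex.continuous_exp.tendsto 0).comp
    (tendsto_integral_phibIntegrand_atBot b hε0 (Complex.I * y))

/-- `Φ_b(x + iy) → 1` as `x → −∞`, for any fixed `y` with `|y| < h_b`. -/
theorem Phib_tendsto_one_atBot (b ε : ℝ) (hb : 0 < b)
    (hε0 : 0 < ε) (hε : ε < π * min b b⁻¹)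
    (y : ℝ) (hy : |y| < (b + b⁻¹) / 2) :
    Tendsto (fun x : ℝ => Phib b ε ((x : ℂ) + Complex.I * (y : ℂ))) atBot (nhds 1) :=
  Phib_tendsto_one_atBot_general b ε hε0 y
end

section
/- Let L ≥ 1 be an integer, let f ∈ L¹(ℝ) and let G : ℝ → ℂ be a bounded measurable function. With the cyclic convention x_{L+1} = x₁ and y_{L+1} = y₁, one has ∫_{ℝ^L} ∏_{j=1}^{L} f(x_j) · G(x_{j+1} − x_j) dx₁⋯dx_L = L · ∫_{ℝ^{L−1}} J_f(y₁, …, y_{L−1}, y_L) · ∏_{j=1}^{L} G(y_{j+1} − y_j) dy₁⋯dy_{L−1}, where y_L := −(y₁ + ⋯ + y_{L−1}) and J_f(x₁, …, x_L) := ∫_ℝ ∏_{j=1}^{L} f(x_j + t) dt. -/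
open MeasureTheory

/-! Substitute `x = (y, -∑ y) + t • 1`, i.e. split `x` into its mean `t` and its deviations from
the mean. This linear change of variables has determinant `L + 1`: it factors as an upper
unipotent shear followed by a lower triangular map with diagonal `(1, …, 1, L + 1)`. The cyclic
differences `x (j + 1) - x j` do not see the common translation `t`, so after Fubini the integral
over `t` falls on the `f`-factors alone and produces `J_f`. -/

namespace LinearMap

variable {E F : Type*} [NormedAddCommGroup E] [NormedSpace ℝ E] [MeasurableSpace E] [BorelSpace E]
  [FiniteDimensional ℝ E] [NormedAddCommGroup F]
  (μ : Measure E) [μ.IsAddHaarMeasure] {A : E →ₗ[ℝ] E}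

theorem measurableEmbedding_of_det_ne_zero (hA : LinearMap.det A ≠ 0) : MeasurableEmbedding A :=
  (A.equivOfDetNeZero hA).toContinuousLinearEquiv.toHomeomorph.isClosedEmbedding.measurableEmbedding

theorem integral_eq_abs_det_smul_integral_comp [NormedSpace ℝ F] (hA : LinearMap.det A ≠ 0)
    (g : E → F) :
    ∫ x, g x ∂μ = |LinearMap.det A| • ∫ z, g (A z) ∂μ := by
  rw [← (measurableEmbedding_of_det_ne_zero hA).integral_map,
    Measure.map_linearMap_addHaar_eq_smul_addHaar μ hA, integral_smul_measure,
    ENNReal.toReal_ofReal (abs_nonneg _), smul_smul, abs_inv,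
    mul_inv_cancel₀ (abs_ne_zero.2 hA), one_smul]

theorem integrable_comp_of_det_ne_zero (hA : LinearMap.det A ≠ 0) {g : E → F}
    (hg : Integrable g μ) : Integrable (fun z => g (A z)) μ := by
  refine (measurableEmbedding_of_det_ne_zero hA).integrable_map_iff.1 ?_
  rw [Measure.map_linearMap_addHaar_eq_smul_addHaar μ hA]
  exact hg.smul_measure ENNReal.ofReal_ne_top

end LinearMap

theorem MeasureTheory.integral_fin_succ_eq_integral_integral_snoc {α E : Type*} [MeasureSpace α]
    [SigmaFinite (volume : Measure α)] [NormedAddCommGroup E] [NormedSpace ℝ E] {n : ℕ}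
    {h : (Fin (n + 1) → α) → E} (hh : Integrable h) :
    ∫ x, h x = ∫ y : Fin n → α, ∫ t : α, h (Fin.snoc y t) := by
  have hsnoc := (volume_preserving_piFinSuccAbove (fun _ : Fin (n + 1) => α) (Fin.last n)).symm
  have hsymm : ∀ p : α × (Fin n → α),
      (MeasurableEquiv.piFinSuccAbove (fun _ => α) (Fin.last n)).symm p = Fin.snoc p.2 p.1 := by
    intro p
    simp [MeasurableEquiv.piFinSuccAbove, Fin.insertNthEquiv, Fin.insertNth_last']
  rw [← hsnoc.integral_comp' h, Measure.volume_eq_prod, integral_prod_symm]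
  · simp only [hsymm]
  · rw [← Measure.volume_eq_prod]
    exact (hsnoc.integrable_comp_emb (MeasurableEquiv.measurableEmbedding _)).2 hh

section ZeroSumTranslate

variable (n : ℕ)

noncomputable def addLastToInit : (Fin (n + 1) → ℝ) →ₗ[ℝ] Fin (n + 1) → ℝ where
  toFun z j := z j + if j = Fin.last n then 0 else z (Fin.last n)
  map_add' x y := by ext j; by_cases h : j = Fin.last n <;> simp [h]; ring
  map_smul' c x := by ext j; by_cases h : j = Fin.last n <;> simp [h]; ring

noncomputable def rebalanceLast : (Fin (n + 1) → ℝ) →ₗ[ℝ] Fin (n + 1) → ℝ where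
  toFun w j :=
    if j = Fin.last n then (n + 1) * w (Fin.last n) - ∑ i : Fin n, w i.castSucc else w j
  map_add' x y := by ext j; by_cases h : j = Fin.last n <;> simp [h, Finset.sum_add_distrib]; ring
  map_smul' c x := by ext j; by_cases h : j = Fin.last n <;> simp [h, ← Finset.mul_sum]; ring

theorem det_addLastToInit : LinearMap.det (addLastToInit n) = 1 := by
  rw [← LinearMap.det_toMatrix', Matrix.det_of_isUpperTriangular]
  · refine Finset.prod_eq_one fun i _ => ?_
    by_cases h : i = Fin.last n <;> simp [LinearMap.toMatrix'_apply, addLastToInit, h]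
  · intro i j (hji : j < i)
    have hj : j ≠ Fin.last n := (hji.trans_le (Fin.le_last i)).ne
    simp [LinearMap.toMatrix'_apply, addLastToInit, hji.ne', hj]

theorem det_rebalanceLast : LinearMap.det (rebalanceLast n) = n + 1 := by
  rw [← LinearMap.det_toMatrix', Matrix.det_of_isLowerTriangular _, Fin.prod_univ_castSucc]
  · simp [LinearMap.toMatrix'_apply, rebalanceLast, (Fin.castSucc_lt_last _).ne]
  · intro i j (hij : i < j)
    have hi : i ≠ Fin.last n := (hij.trans_le (Fin.le_last j)).ne
    simp [LinearMap.toMatrix'_apply, rebalanceLast, hij.ne, hi]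

noncomputable def zeroSumTranslate : (Fin (n + 1) → ℝ) →ₗ[ℝ] Fin (n + 1) → ℝ :=
  rebalanceLast n ∘ₗ addLastToInit n

theorem det_zeroSumTranslate : LinearMap.det (zeroSumTranslate n) = n + 1 := by
  rw [zeroSumTranslate, LinearMap.det_comp, det_rebalanceLast, det_addLastToInit, mul_one]

theorem zeroSumTranslate_snoc (y : Fin n → ℝ) (t : ℝ) :
    zeroSumTranslate n (Fin.snoc y t) =
      fun j => (Fin.snoc y (-∑ i, y i) : Fin (n + 1) → ℝ) j + t := by
  ext j
  induction j using Fin.lastCases with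
  | last =>
    simp [zeroSumTranslate, rebalanceLast, addLastToInit, (Fin.castSucc_lt_last _).ne,
      Finset.sum_add_distrib]
    ring
  | cast i => simp [zeroSumTranslate, rebalanceLast, addLastToInit, (Fin.castSucc_lt_last _).ne]

end ZeroSumTranslate

section CyclicProduct

variable {n : ℕ} (f G : ℝ → ℂ)

def cyclicProduct (x : Fin (n + 1) → ℝ) : ℂ :=
  ∏ j, f (x j) * G (x (j + 1) - x j)

theorem cyclicProduct_add_const (w : Fin (n + 1) → ℝ) (t : ℝ) :
    cyclicProduct f G (fun j => w j + t) = (∏ j, f (w j + t)) * ∏ j, G (w (j + 1) - w j) := by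
  simp [cyclicProduct, Finset.prod_mul_distrib]

variable {f G}

theorem integrable_cyclicProduct (hf : Integrable f) (hG : Measurable G) {M : ℝ}
    (hM : ∀ x, ‖G x‖ ≤ M) :
    Integrable (cyclicProduct f G : (Fin (n + 1) → ℝ) → ℂ) := by
  have hGmeas : Measurable fun x : Fin (n + 1) → ℝ => ∏ j, G (x (j + 1) - x j) :=
    Finset.measurable_prod _ fun j _ => hG.comp (by fun_prop)
  have hGprod (x : Fin (n + 1) → ℝ) : ‖∏ j, G (x (j + 1) - x j)‖ ≤ M ^ (n + 1) := by
    rw [norm_prod]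
    exact (Finset.prod_le_prod (fun _ _ => norm_nonneg _) fun _ _ => hM _).trans_eq (by simp)
  have := (Integrable.fintype_prod (fun _ : Fin (n + 1) => hf)).bdd_mul
    hGmeas.aestronglyMeasurable (.of_forall hGprod)
  refine this.congr (.of_forall fun x => ?_)
  simp only [cyclicProduct, Finset.prod_mul_distrib, mul_comm]

end CyclicProduct

/-- Reduction of a cyclic `L`-dimensional trace integral to an `(L−1)`-dimensional one
(stated with `L + 1` variables, `L : ℕ`, so that the number of variables is `≥ 1`):
`∫_{ℝ^L} ∏_j f(x_j)·G(x_{j+1} − x_j) dx = L·∫_{ℝ^{L−1}} J_f(y)·∏_j G(y_{j+1} − y_j) dy`,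
where the last coordinate of `y` is `−(y₁ + ⋯ + y_{L−1})`, indices are cyclic, and
`J_f(x₁,…,x_L) = ∫ ∏_j f(x_j + t) dt`. -/
theorem cyclic_trace_integral (L : ℕ) (f G : ℝ → ℂ)
    (hf : Integrable f (volume : Measure ℝ)) (hG : Measurable G)
    (hGbd : ∃ M : ℝ, ∀ x : ℝ, ‖G x‖ ≤ M) :
    (∫ x : Fin (L + 1) → ℝ, ∏ j : Fin (L + 1), f (x j) * G (x (j + 1) - x j)) =
      ((L : ℂ) + 1) * ∫ y : Fin L → ℝ,
        (∫ t : ℝ, ∏ j : Fin (L + 1),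
            f ((Fin.snoc y (-(∑ i : Fin L, y i)) : Fin (L + 1) → ℝ) j + t)) *
          ∏ j : Fin (L + 1),
            G ((Fin.snoc y (-(∑ i : Fin L, y i)) : Fin (L + 1) → ℝ) (j + 1) -
               (Fin.snoc y (-(∑ i : Fin L, y i)) : Fin (L + 1) → ℝ) j) := by
  obtain ⟨M, hM⟩ := hGbd
  have hdet : LinearMap.det (zeroSumTranslate L) ≠ 0 := by
    rw [det_zeroSumTranslate]; positivity
  have hint :=
    LinearMap.integrable_comp_of_det_ne_zero volume hdet (integrable_cyclicProduct hf hG hM)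
  calc ∫ x, cyclicProduct f G x
      = ((L : ℝ) + 1) • ∫ z, cyclicProduct f G (zeroSumTranslate L z) := by
        rw [LinearMap.integral_eq_abs_det_smul_integral_comp volume hdet, det_zeroSumTranslate,
          abs_of_pos (by positivity)]
    _ = ((L : ℝ) + 1) • ∫ y, ∫ t, cyclicProduct f G (zeroSumTranslate L (Fin.snoc y t)) :=
        by rw [integral_fin_succ_eq_integral_integral_snoc hint]
    _ = _ := by
        simp_rw [zeroSumTranslate_snoc, cyclicProduct_add_const, integral_mul_const,
          Complex.real_smul]
        push_cast
        rfl
end
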